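/- arXiv:math/0101097 — 4 statements merged into one kernel-verified Lean document; each statement's English description precedes it below -/
import Mathlib

section
/- If F is a complete filtered vector space of finite type (i.e., each quotient F^n/F^{n+1} is finite dimensional) and f : F → G is a continuous linear map of filtered topological vector spaces, then the image of f is closed in G. -/
variable {K V W : Type*} [Field K] [AddCommGroup V] [Module K V]

/-- A (decreasing) filtration on a vector space: `F 0` is everything, the `F n`
are decreasing, and their intersection is zero. -/
def IsFilt (F : ℕ → Submodule K V) : Prop :=
  F 0 = ⊤ ∧ (∀ n, F (n + 1) ≤ F n) ∧ (⨅ n, F n) = ⊥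

/-- Convergence of a sequence in the filtration topology. -/
def TendstoFilt (F : ℕ → Submodule K V) (x : ℕ → V) (l : V) : Prop :=
  ∀ n, ∃ m, ∀ i, m ≤ i → l - x i ∈ F n

/-- Cauchy sequences for the filtration topology. -/
def CauchyFilt (F : ℕ → Submodule K V) (x : ℕ → V) : Prop :=
  ∀ n, ∃ m, ∀ i j, m ≤ i → m ≤ j → x i - x j ∈ F n

/-- Completeness: every Cauchy sequence converges. -/
def CompleteFilt (F : ℕ → Submodule K V) : Prop :=
  ∀ x : ℕ → V, CauchyFilt F x → ∃ l, TendstoFilt F x l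

/-- A subspace is closed in the filtration topology iff it contains all limits
of its convergent sequences. -/
def ClosedFilt (F : ℕ → Submodule K V) (B : Submodule K V) : Prop :=
  ∀ (x : ℕ → V) (l : V), (∀ i, x i ∈ B) → TendstoFilt F x l → l ∈ B

/-- Finite type: each quotient `F n / F (n+1)` is finite dimensional. -/
def FiniteTypeFilt (F : ℕ → Submodule K V) : Prop :=
  ∀ n, FiniteDimensional K (↥(F n) ⧸ Submodule.comap (F n).subtype (F (n + 1)))

/-! The sets `c n + f⁻¹(G n)`, with `l - f (c n) ∈ G n`, form a decreasing chain of cosets.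
Modulo `F k` this chain stabilises, since `V ⧸ F k` is finite dimensional, so one can pick
points of the stable cosets one `k` at a time, each differing from the previous one by an element
of `F k`. By completeness they converge to some `v`, and continuity of `f` puts `l - f v` in
every `G n`. -/

open Submodule

theorem finiteDimensional_quotient_of_le {S T : Submodule K V} (hST : S ≤ T)
    [FiniteDimensional K (T ⧸ S.comap T.subtype)] [FiniteDimensional K (V ⧸ T)] :
    FiniteDimensional K (V ⧸ S) := by
  refine Module.Finite.of_exact (f := (S.comap T.subtype).mapQ S T.subtype le_rfl)
    (g := factor hST) ?_ (factor_surjective hST)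
  rw [LinearMap.exact_iff]
  simp [ker_mapQ, range_mapQ]

theorem finiteDimensional_quotient_of_finiteTypeFilt {F : ℕ → Submodule K V} (hF0 : F 0 = ⊤)
    (hF : ∀ n, F (n + 1) ≤ F n) (hFt : FiniteTypeFilt F) (k : ℕ) :
    FiniteDimensional K (V ⧸ F k) := by
  induction k with
  | zero =>
    have : Subsingleton (V ⧸ F 0) := Submodule.Quotient.subsingleton_iff.mpr hF0
    infer_instance
  | succ k ih =>
    have := hFt k
    exact finiteDimensional_quotient_of_le (hF k)

theorem exists_stable_of_antitone_of_le {S : Submodule K V} [FiniteDimensional K (V ⧸ S)]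
    {T : ℕ → Submodule K V} (hT : Antitone T) (hST : ∀ n, S ≤ T n) :
    ∃ M, ∀ n, M ≤ n → T n = T M := by
  obtain ⟨M, hM⟩ := IsArtinian.monotone_stabilizes
    ⟨fun n => OrderDual.toDual ((T n).map S.mkQ), fun _ _ h => map_mono (hT h)⟩
  refine ⟨M, fun n hn => ?_⟩
  have h : (T M).map S.mkQ = (T n).map S.mkQ := hM n hn
  replace h := congrArg (comap S.mkQ) h
  rwa [comap_map_mkQ, comap_map_mkQ, sup_eq_right.mpr (hST M), sup_eq_right.mpr (hST n),
    eq_comm] at h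

theorem exists_seq_of_forall_exists {α : Type*} (P : ℕ → α → Prop) (R : ℕ → α → α → Prop)
    {a : α} (ha : P 0 a) (h : ∀ k x, P k x → ∃ y, P (k + 1) y ∧ R k x y) :
    ∃ x : ℕ → α, (∀ k, P k (x k)) ∧ ∀ k, R k (x k) (x (k + 1)) := by
  choose g hg using h
  let s : ∀ k, {x // P k x} := fun k =>
    Nat.rec ⟨a, ha⟩ (fun k x => ⟨g k x x.2, (hg k x x.2).1⟩) k
  exact ⟨fun k => (s k).1, fun k => (s k).2, fun k => (hg k _ (s k).2).2⟩

theorem cauchyFilt_of_succ_sub_mem {F : ℕ → Submodule K V} (hF : Antitone F) {v : ℕ → V}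
    (hv : ∀ k, v (k + 1) - v k ∈ F k) : CauchyFilt F v := by
  have hmono : ∀ n i j, n ≤ i → i ≤ j → v j - v i ∈ F n := by
    intro n i j hni hij
    induction j, hij using Nat.le_induction with
    | base => simp
    | succ j hij ih =>
      rw [← sub_add_sub_cancel]
      exact add_mem (hF (hni.trans hij) (hv j)) ih
  intro n
  refine ⟨n, fun i j hi hj => ?_⟩
  rcases le_total i j with h | h
  · exact sub_mem_comm_iff.mp (hmono n i j hi h)
  · exact hmono n j i hj h

theorem add_sub_mem_sup_of_stable {U : ℕ → Submodule K V} (hU : Antitone U) {c : ℕ → V}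
    (hc : ∀ n n', n ≤ n' → c n' - c n ∈ U n) {S : Submodule K V} {M : ℕ}
    (hM : ∀ n, M ≤ n → U n ⊔ S = U M ⊔ S) {a : V} (ha : a ∈ U M) (n : ℕ) :
    c M + a - c n ∈ U n ⊔ S := by
  rcases le_total n M with h | h
  · rw [show c M + a - c n = (c M - c n) + a by abel]
    exact mem_sup_left (add_mem (hc n M h) (hU h ha))
  · rw [hM n h, show c M + a - c n = a - (c n - c M) by abel]
    exact mem_sup_left (sub_mem ha (hc M n h))

theorem CompleteFilt.exists_forall_sub_mem_sup {F : ℕ → Submodule K V} (hF : Antitone F)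
    (hFc : CompleteFilt F) (hfd : ∀ k, FiniteDimensional K (V ⧸ F k))
    {U : ℕ → Submodule K V} (hU : Antitone U) {c : ℕ → V}
    (hc : ∀ n n', n ≤ n' → c n' - c n ∈ U n) :
    ∃ v, ∀ n k, v - c n ∈ U n ⊔ F k := by
  have hstable : ∀ k, ∃ M, ∀ n, M ≤ n → U n ⊔ F k = U M ⊔ F k := fun k =>
    exists_stable_of_antitone_of_le (fun _ _ h => sup_le_sup_right (hU h) _)
      (fun _ => le_sup_right)
  choose M hM using hstable
  have hstart : ∀ n, c (M 0) + 0 - c n ∈ U n ⊔ F 0 :=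
    add_sub_mem_sup_of_stable hU hc (hM 0) (zero_mem _)
  have hstep : ∀ k v, (∀ n, v - c n ∈ U n ⊔ F k) →
      ∃ v', (∀ n, v' - c n ∈ U n ⊔ F (k + 1)) ∧ v' - v ∈ F k := by
    intro k v hv
    obtain ⟨a, ha, b, hb, hab⟩ := mem_sup.mp (hv (M (k + 1)))
    refine ⟨c (M (k + 1)) + a, add_sub_mem_sup_of_stable hU hc (hM (k + 1)) ha, ?_⟩
    have hb' : b = v - c (M (k + 1)) - a := by rw [← hab]; abel
    rw [show c (M (k + 1)) + a - v = -b by rw [hb']; abel]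
    exact neg_mem hb
  obtain ⟨v, hvc, hvsucc⟩ := exists_seq_of_forall_exists _ _ hstart hstep
  obtain ⟨w, hw⟩ := hFc v (cauchyFilt_of_succ_sub_mem hF hvsucc)
  refine ⟨w, fun n k => ?_⟩
  obtain ⟨m, hm⟩ := hw k
  have hi : v (max m k) - c n ∈ U n ⊔ F k :=
    sup_le_sup_left (hF (le_max_right m k)) _ (hvc _ n)
  rw [← sub_add_sub_cancel w (v (max m k))]
  exact add_mem (mem_sup_right (hm _ (le_max_left m k))) hi

theorem eq_of_forall_sub_mem {F : ℕ → Submodule K V} (hF : (⨅ n, F n) = ⊥) {x y : V}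
    (h : ∀ n, x - y ∈ F n) : x = y := by
  rw [← sub_eq_zero, ← mem_bot K, ← hF, mem_iInf]
  exact h

/-- If `F` is a complete filtered vector space of finite type and `f : F → G` is a
continuous linear map of filtered vector spaces, then the image of `f` is closed in `G`. -/
theorem stmt0 [AddCommGroup W] [Module K W]
    (F : ℕ → Submodule K V) (G : ℕ → Submodule K W) (f : V →ₗ[K] W)
    (hF : IsFilt F) (hFc : CompleteFilt F) (hFt : FiniteTypeFilt F)
    (hG : IsFilt G)
    (hcont : ∀ n, ∃ m, ∀ x ∈ F m, f x ∈ G n) :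
    ClosedFilt G (LinearMap.range f) := by
  obtain ⟨hF0, hFsucc, -⟩ := hF
  obtain ⟨-, hGsucc, hGinf⟩ := hG
  have hGanti : Antitone G := antitone_nat_of_succ_le hGsucc
  rintro x l hx hxl
  have happrox : ∀ n, ∃ c, l - f c ∈ G n := fun n => by
    obtain ⟨m, hm⟩ := hxl n
    obtain ⟨c, hc⟩ := hx m
    exact ⟨c, hc ▸ hm m le_rfl⟩
  choose c hc using happrox
  have hcoset : ∀ n n', n ≤ n' → c n' - c n ∈ (G n).comap f := fun n n' h => by
    rw [mem_comap, map_sub, ← sub_sub_sub_cancel_left _ _ l]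
    exact sub_mem (hc n) (hGanti h (hc n'))
  obtain ⟨v, hv⟩ := hFc.exists_forall_sub_mem_sup (antitone_nat_of_succ_le hFsucc)
    (finiteDimensional_quotient_of_finiteTypeFilt hF0 hFsucc hFt)
    (fun _ _ h => comap_mono (hGanti h)) hcoset
  refine ⟨v, (eq_of_forall_sub_mem hGinf fun n => ?_).symm⟩
  obtain ⟨k, hk⟩ := hcont n
  obtain ⟨a, ha, b, hb, hab⟩ := mem_sup.mp (hv n k)
  rw [show l - f v = (l - f (c n)) - (f a + f b) by rw [← map_add, hab, map_sub]; abel]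
  exact sub_mem (hc n) (add_mem ha (hk b hb))
end

section
/- Let F be a complete filtered vector space of finite type equipped with a continuous linear coboundary operator d satisfying d² = 0 and d(F^n) ⊆ F^n for all n. Then the homology H(F) = ker d / im d, with the filtration induced from F, is a complete filtered vector space. -/
variable {K V W : Type*} [Field K] [AddCommGroup V] [Module K V]

/-!
The cycles `ker d` form a closed, hence complete, subspace, and a quotient of a complete
filtered space is complete; so the content is that the induced filtration on homology is
separated, i.e. that the boundaries are closed: `⋂ₙ (im d + Fⁿ) = im d`. Since each `V / Fⁿ`
is finite dimensional, the chains `d⁻¹(Fᵐ) + Fⁿ` stabilise in `m` (a Mittag-Leffler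
condition). This lets one successively correct approximate preimages of a point of
`⋂ₙ (im d + Fⁿ)` by ever smaller terms, and the limit of the corrections is an exact preimage.
-/

open Filter

section Filtration

variable [AddCommGroup W] [Module K W] {F : ℕ → Submodule K V}

lemma IsFilt.antitone (hF : IsFilt F) : Antitone F :=
  antitone_nat_of_succ_le hF.2.1

lemma IsFilt.eq_zero_of_forall_mem (hF : IsFilt F) {v : V} (hv : ∀ n, v ∈ F n) : v = 0 := by
  rw [← Submodule.mem_bot K, ← hF.2.2]
  exact (Submodule.mem_iInf _).2 hv

lemma IsFilt.comap (hF : IsFilt F) {f : W →ₗ[K] V} (hf : Function.Injective f) :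
    IsFilt fun n => (F n).comap f := by
  refine ⟨by simp [hF.1], fun n => Submodule.comap_mono (hF.2.1 n), ?_⟩
  rw [← Submodule.comap_iInf, hF.2.2, Submodule.comap_bot, LinearMap.ker_eq_bot.2 hf]

lemma IsFilt.map_mkQ (hF : IsFilt F) {B : Submodule K V} (hB : ⨅ n, B ⊔ F n ≤ B) :
    IsFilt fun n => (F n).map B.mkQ := by
  refine ⟨by simp [hF.1], fun n => Submodule.map_mono (hF.2.1 n), ?_⟩
  rw [eq_bot_iff, ← Submodule.comap_le_comap_iff_of_surjective B.mkQ_surjective,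
    Submodule.comap_iInf]
  simpa only [Submodule.comap_map_mkQ, Submodule.comap_bot, Submodule.ker_mkQ] using hB

lemma iInf_sup_comap_le {B : Submodule K V} (hB : ⨅ n, B ⊔ F n ≤ B) (f : W →ₗ[K] V) :
    ⨅ n, B.comap f ⊔ (F n).comap f ≤ B.comap f := fun _ hw =>
  hB <| (Submodule.mem_iInf _).2 fun n =>
    (sup_le (Submodule.comap_mono le_sup_left) (Submodule.comap_mono le_sup_right) :
      B.comap f ⊔ (F n).comap f ≤ (B ⊔ F n).comap f) ((Submodule.mem_iInf _).1 hw n)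

lemma TendstoFilt.unique (hF : IsFilt F) {x : ℕ → V} {l l' : V} (h : TendstoFilt F x l)
    (h' : TendstoFilt F x l') : l = l' := by
  refine sub_eq_zero.1 (hF.eq_zero_of_forall_mem fun n => ?_)
  obtain ⟨m, hm⟩ := h n
  obtain ⟨m', hm'⟩ := h' n
  have := (F n).sub_mem (hm _ (le_max_left m m')) (hm' _ (le_max_right m m'))
  rwa [sub_sub_sub_cancel_right] at this

lemma TendstoFilt.map {G : ℕ → Submodule K W} (f : V →ₗ[K] W) (hf : ∀ n, ∀ v ∈ F n, f v ∈ G n)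
    {x : ℕ → V} {l : V} (h : TendstoFilt F x l) : TendstoFilt G (f ∘ x) (f l) := fun n =>
  let ⟨m, hm⟩ := h n
  ⟨m, fun i hi => by simpa using hf n _ (hm i hi)⟩

lemma CauchyFilt.tendstoFilt_of_comp {x : ℕ → V} (hx : CauchyFilt F x) {φ : ℕ → ℕ}
    (hφ : StrictMono φ) {l : V} (h : TendstoFilt F (x ∘ φ) l) : TendstoFilt F x l := by
  intro n
  obtain ⟨m, hm⟩ := hx n
  obtain ⟨p, hp⟩ := h n
  refine ⟨m, fun i hi => ?_⟩
  have hj : m ≤ φ (max m p) := (le_max_left m p).trans (hφ.id_le _)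
  have := (F n).add_mem (hp _ (le_max_right m p)) (hm _ i hj hi)
  rwa [Function.comp_apply, sub_add_sub_cancel] at this

lemma cauchyFilt_of_succ_sub_mem_s3 (hF : Antitone F) {x : ℕ → V}
    (hx : ∀ n, x (n + 1) - x n ∈ F n) : CauchyFilt F x := by
  have tail : ∀ i j, i ≤ j → x j - x i ∈ F i := by
    intro i j hij
    induction j, hij using Nat.le_induction with
    | base => simp
    | succ j hij ih =>
      rw [← sub_add_sub_cancel (x (j + 1)) (x j) (x i)]
      exact (F i).add_mem (hF hij (hx j)) ih
  intro n
  refine ⟨n, fun i j hi hj => ?_⟩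
  rw [← sub_sub_sub_cancel_right (x i) (x j) (x n)]
  exact (F n).sub_mem (tail n i hi) (tail n j hj)

lemma exists_tendstoFilt_of_approx (hF : Antitone F) (hFc : CompleteFilt F) (P : ℕ → V → Prop)
    {a₀ : V} (h₀ : P 0 a₀) (step : ∀ n a, P n a → ∃ a', a' - a ∈ F n ∧ P (n + 1) a') :
    ∃ a : ℕ → V, (∀ n, P n (a n)) ∧ ∃ l, TendstoFilt F a l := by
  choose next hnext using step
  let a : ∀ n, {v // P n v} := fun n =>
    Nat.rec ⟨a₀, h₀⟩ (fun n v => ⟨next n v v.2, (hnext n v v.2).2⟩) n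
  have hsucc : ∀ n, (a (n + 1)).1 - (a n).1 ∈ F n := fun n => (hnext n (a n).1 (a n).2).1
  exact ⟨fun n => (a n).1, fun n => (a n).2, hFc _ (cauchyFilt_of_succ_sub_mem_s3 hF hsucc)⟩

lemma completeFilt_map_mkQ (hF : Antitone F) (hFc : CompleteFilt F) (B : Submodule K V) :
    CompleteFilt fun n => (F n).map B.mkQ := by
  intro x hx
  obtain ⟨φ, hφ, hφx⟩ := extraction_forall_of_eventually fun n =>
    let ⟨m, hm⟩ := hx n
    eventually_atTop.2 ⟨m, fun k hk i j hi hj => hm i j (hk.trans hi) (hk.trans hj)⟩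
  obtain ⟨y₀, hy₀⟩ := B.mkQ_surjective (x (φ 0))
  obtain ⟨y, hy, l, hl⟩ := exists_tendstoFilt_of_approx hF hFc (fun n y => B.mkQ y = x (φ n)) hy₀
    fun n y hy => by
      obtain ⟨v, hv, hvx⟩ := hφx n (φ (n + 1)) (φ n) (hφ.monotone n.le_succ) le_rfl
      exact ⟨y + v, by rwa [add_sub_cancel_left], by rw [map_add, hy, hvx, add_sub_cancel]⟩
  refine ⟨B.mkQ l, hx.tendstoFilt_of_comp hφ ?_⟩
  have hyφ : B.mkQ ∘ y = x ∘ φ := funext hy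
  exact hyφ ▸ hl.map B.mkQ fun n v hv => Submodule.mem_map_of_mem hv

lemma completeFilt_comap_subtype (hFc : CompleteFilt F) {Z : Submodule K V} (hZ : ClosedFilt F Z) :
    CompleteFilt fun n => (F n).comap Z.subtype := by
  intro x hx
  obtain ⟨l, hl⟩ := hFc (fun i => x i) hx
  exact ⟨⟨l, hZ _ l (fun i => (x i).2) hl⟩, hl⟩

lemma closedFilt_ker {G : ℕ → Submodule K W} (hG : IsFilt G) (f : V →ₗ[K] W)
    (hf : ∀ n, ∀ v ∈ F n, f v ∈ G n) : ClosedFilt F (LinearMap.ker f) := by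
  intro x l hx hl
  have h0 : TendstoFilt G (f ∘ x) 0 := fun n => ⟨0, fun i _ => by simp [LinearMap.mem_ker.1 (hx i)]⟩
  exact LinearMap.mem_ker.2 ((hl.map f hf).unique hG h0)

lemma IsFilt.finiteDimensional_quotient (hF : IsFilt F) (hFt : FiniteTypeFilt F) (n : ℕ) :
    FiniteDimensional K (V ⧸ F n) := by
  induction n with
  | zero =>
    have := Submodule.Quotient.subsingleton_iff.2 hF.1
    infer_instance
  | succ n ih =>
    have := hFt n
    refine Module.Finite.of_exact (f := Submodule.mapQ _ (F (n + 1)) (F n).subtype le_rfl)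
      (g := Submodule.factor (hF.2.1 n)) ?_ (Submodule.factor_surjective _)
    rw [LinearMap.exact_iff]
    simp [Submodule.factor, Submodule.ker_mapQ, Submodule.range_mapQ]

lemma eventually_sup_stable {p : Submodule K V} [FiniteDimensional K (V ⧸ p)]
    {T : ℕ → Submodule K V} (hT : Antitone T) :
    ∀ᶠ k in atTop, ∀ m, k ≤ m → p ⊔ T m = p ⊔ T k := by
  obtain ⟨N, hN⟩ := IsArtinian.monotone_stabilizes
    ⟨fun m => OrderDual.toDual ((T m).map p.mkQ), fun i j h => Submodule.map_mono (hT h)⟩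
  have key : ∀ m, N ≤ m → p ⊔ T m = p ⊔ T N := fun m hm => by
    rw [← Submodule.comap_map_mkQ, ← Submodule.comap_map_mkQ]
    exact congrArg (fun q => Submodule.comap p.mkQ (OrderDual.ofDual q)) (hN m hm).symm
  exact eventually_atTop.2 ⟨N, fun k hk m hkm => (key m (hk.trans hkm)).trans (key k hk).symm⟩

lemma iInf_range_sup_le_range (hF : IsFilt F) (hFc : CompleteFilt F) (hFt : FiniteTypeFilt F)
    {G : ℕ → Submodule K W} (hG : IsFilt G) (f : V →ₗ[K] W) (hf : ∀ n, ∀ v ∈ F n, f v ∈ G n) :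
    ⨅ n, LinearMap.range f ⊔ G n ≤ LinearMap.range f := by
  intro z hz
  have approx : ∀ m, ∃ a, f a - z ∈ G m := fun m => by
    obtain ⟨_, ⟨a, rfl⟩, g, hg, rfl⟩ := Submodule.mem_sup.1 ((Submodule.mem_iInf _).1 hz m)
    exact ⟨a, by rw [sub_add_cancel_left]; exact (G m).neg_mem hg⟩
  obtain ⟨μ, hμ, hμT⟩ := extraction_forall_of_eventually fun n =>
    have := hF.finiteDimensional_quotient hFt n
    eventually_sup_stable (p := F n) (T := fun m => (G m).comap f)
      fun _ _ h => Submodule.comap_mono (hG.antitone h)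
  -- Stability of `F n ⊔ f⁻¹(G m)` in `m ≥ μ n` lets an approximate preimage modulo `G (μ n)`
  -- be corrected by a term of `F n` into one modulo `G (μ (n + 1))`.
  obtain ⟨a₀, ha₀⟩ := approx (μ 0)
  obtain ⟨a, ha, l, hl⟩ := exists_tendstoFilt_of_approx hF.antitone hFc
    (fun n a => f a - z ∈ G (μ n)) ha₀ fun n a ha => by
      obtain ⟨b, hb⟩ := approx (μ (n + 1))
      have hab : a - b ∈ F n ⊔ (G (μ (n + 1))).comap f := by
        rw [hμT n (μ (n + 1)) (hμ.monotone n.le_succ)]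
        refine Submodule.mem_sup_right ?_
        rw [Submodule.mem_comap, map_sub, ← sub_sub_sub_cancel_right (f a) (f b) z]
        exact (G (μ n)).sub_mem ha (hG.antitone (hμ.monotone n.le_succ) hb)
      obtain ⟨e, he, t, ht, hab⟩ := Submodule.mem_sup.1 hab
      obtain rfl : a = e + t + b := sub_eq_iff_eq_add.1 hab.symm
      refine ⟨b + t, ?_, ?_⟩
      · rw [show b + t - (e + t + b) = -e by abel]
        exact (F n).neg_mem he
      · rw [map_add, add_sub_right_comm]
        exact (G _).add_mem hb ht
  refine ⟨l, (hl.map f hf).unique hG fun n => ⟨n, fun i hi => ?_⟩⟩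
  rw [← neg_sub]
  exact (G n).neg_mem (hG.antitone (hi.trans (hμ.id_le i)) (ha i))

end Filtration

theorem stmt3_general (F : ℕ → Submodule K V) (hF : IsFilt F) (hFc : CompleteFilt F)
    (hFt : FiniteTypeFilt F) (d : V →ₗ[K] V)
    (hdF : ∀ n, ∀ x ∈ F n, d x ∈ F n) :
    IsFilt (fun n => ((F n).comap (LinearMap.ker d).subtype).map
        ((LinearMap.range d).comap (LinearMap.ker d).subtype).mkQ) ∧
      CompleteFilt (fun n => ((F n).comap (LinearMap.ker d).subtype).map
        ((LinearMap.range d).comap (LinearMap.ker d).subtype).mkQ) := by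
  have hZ := hF.comap (LinearMap.ker d).injective_subtype
  exact ⟨hZ.map_mkQ (iInf_sup_comap_le (iInf_range_sup_le_range hF hFc hFt hF d hdF) _),
    completeFilt_map_mkQ hZ.antitone (completeFilt_comap_subtype hFc (closedFilt_ker hF d hdF)) _⟩

/-- If `F` is a complete filtered vector space of finite type with a filtration-preserving
coboundary operator `d` (with `d² = 0`), then the homology `ker d / im d`, with the
induced filtration, is a complete filtered vector space. -/
theorem stmt3 (F : ℕ → Submodule K V) (hF : IsFilt F) (hFc : CompleteFilt F)
    (hFt : FiniteTypeFilt F) (d : V →ₗ[K] V) (hd2 : d ∘ₗ d = 0)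
    (hdF : ∀ n, ∀ x ∈ F n, d x ∈ F n) :
    IsFilt (fun n => ((F n).comap (LinearMap.ker d).subtype).map
        ((LinearMap.range d).comap (LinearMap.ker d).subtype).mkQ) ∧
      CompleteFilt (fun n => ((F n).comap (LinearMap.ker d).subtype).map
        ((LinearMap.range d).comap (LinearMap.ker d).subtype).mkQ) :=
  stmt3_general F hF hFc hFt d hdF
end

section
/- Let A be a commutative augmented algebra with augmentation ideal m, N an A-module with N·m = 0, and B an extension of A by N. The automorphisms of B over A (algebra automorphisms of B fixing N pointwise and inducing the identity on A) are in bijection with the derivations Der(A,N) = ker d₁ ⊆ Hom(m,N), via λ ↦ f_λ where f_λ(n,a) = (n + λ(a), a). -/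
/-- Multiplication on the square-zero extension `N ⊕ A` of an augmented algebra `A` by a
trivial module `N`, for a reduced symmetric 2-cocycle `φ`. -/
def extMulAug {K A N : Type*} [Field K] [CommRing A] [Algebra K A]
    [AddCommGroup N] [Module K N]
    (ε : A →ₐ[K] K) (φ : A →ₗ[K] A →ₗ[K] N) (p q : N × A) : N × A :=
  (ε q.2 • p.1 + ε p.2 • q.1 + φ p.2 q.2, p.2 * q.2)

/-- Automorphisms of an extension `B = N ⊕ A` over `A` are in bijection with derivations
`Der(A,N) = ker d₁`: first, `f_lam(n,a) = (n + lam a, a)` is a unital algebra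
automorphism over `A` iff `lam` is a 1-cocycle (derivation); second, every linear
automorphism over `A` fixing `N` pointwise and preserving multiplication is of the form
`f_lam` for such a derivation `lam`. -/
theorem stmt15 {K A N : Type*} [Field K] [CommRing A] [Algebra K A]
    [AddCommGroup N] [Module K N]
    (ε : A →ₐ[K] K) (φ : A →ₗ[K] A →ₗ[K] N)
    (hsym : ∀ a b : A, φ a b = φ b a) (hred : ∀ a : A, φ 1 a = 0)
    (hcoc : ∀ a b c : A, ε a • φ b c - φ (a * b) c + φ a (b * c) - ε c • φ a b = 0) :
    (∀ lam : A →ₗ[K] N,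
      ((∀ p q : N × A,
          (((extMulAug ε φ p q).1 + lam (extMulAug ε φ p q).2, (extMulAug ε φ p q).2)
            : N × A) =
          extMulAug ε φ (p.1 + lam p.2, p.2) (q.1 + lam q.2, q.2)) ∧
        lam 1 = 0) ↔
      (∀ a b : A, ε a • lam b - lam (a * b) + ε b • lam a = 0)) ∧
    (∀ F : N × A →ₗ[K] N × A,
      (∀ p : N × A, (F p).2 = p.2) →
      (∀ n : N, F (n, 0) = (n, 0)) →
      (∀ p q : N × A, F (extMulAug ε φ p q) = extMulAug ε φ (F p) (F q)) →
      ∃ lam : A →ₗ[K] N,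
        (∀ a b : A, ε a • lam b - lam (a * b) + ε b • lam a = 0) ∧
        ∀ p : N × A, F p = (p.1 + lam p.2, p.2)) := by
  constructor
  · intro lam
    constructor
    · rintro ⟨hmul, h1⟩ a b
      have h := congrArg Prod.fst (hmul (0, a) (0, b))
      simp only [extMulAug, smul_zero, zero_add, add_zero] at h
      linear_combination (norm := module) -h
    · intro hder
      constructor
      · intro p q
        simp only [extMulAug, Prod.mk.injEq]
        refine ⟨?_, trivial⟩
        have hl : lam (p.2 * q.2) = ε p.2 • lam q.2 + ε q.2 • lam p.2 := by
          linear_combination (norm := module) -(hder p.2 q.2)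
        rw [hl]
        simp only [smul_add]
        abel
      · have h := hder 1 1
        simp only [map_one, one_smul, mul_one] at h
        linear_combination (norm := module) h
  · intro F h2 hN hm
    set lam : A →ₗ[K] N :=
      (LinearMap.fst K N A) ∘ₗ F ∘ₗ (LinearMap.inr K N A) with hlam
    have hF : ∀ p : N × A, F p = (p.1 + lam p.2, p.2) := by
      intro p
      have hsplit : p = ((p.1, 0) : N × A) + (0, p.2) := by simp
      rw [hsplit, map_add, hN]
      have h2' := h2 (0, p.2)
      ext
      · simp [hlam]
      · simpa [hlam] using h2'
    refine ⟨lam, ?_, hF⟩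
    intro a b
    have h := congrArg Prod.fst (hm (0, a) (0, b))
    rw [hF, hF, hF] at h
    simp only [extMulAug, smul_zero, zero_add, add_zero, smul_add] at h
    linear_combination (norm := module) -h
end

section
/- Let d+δ be an A-deformation of d, and let 0 → M → B → A → 0 and 0 → N → B' → A → 0 be two infinitesimal extensions of A related by a morphism g : M → N of extensions (a module map g such that the extension cocycle of B' is g composed with the extension cocycle of B, up to coboundary). If γ̄ ∈ H(L) ⊗̂ M is the obstruction class to extending the deformation d+δ to L ⊗̂ B, then the obstruction class to extending d+δ to L ⊗̂ B' equals the image (1 ⊗ g)(γ̄) ∈ H(L) ⊗̂ N. -/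
/-- Naturality of the obstruction.  `V` models `L ⊗̂ B`, `W` models `L ⊗̂ B'`, and
`Φ : V → W` models `1 ⊗ f` for a morphism of extensions `g : M → N` (so `Φ` is an even
bracket morphism carrying `LM = L ⊗̂ M` into `LN = L ⊗̂ N`, and the lifts `δB, δB'` of the
given deformation `δ` agree modulo `L ⊗̂ N`).  If `γ = D(δB) + ½[δB,δB] ∈ L ⊗̂ M` is the
obstruction cocycle for `B`, then the obstruction class for `B'` is the image of the
class of `γ`: the obstruction cocycle `γ' = D(δB') + ½[δB',δB']` differs from `Φ(γ)`
by a coboundary of an odd element of `L ⊗̂ N`. -/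
theorem stmt19 {K V W : Type*} [Field K] [CharZero K]
    [AddCommGroup V] [Module K V] [AddCommGroup W] [Module K W]
    (gV : ZMod 2 → Submodule K V) (gW : ZMod 2 → Submodule K W)
    (bV : V →ₗ[K] V →ₗ[K] V) (bW : W →ₗ[K] W →ₗ[K] W)
    (hantiW : ∀ (i j : ZMod 2), ∀ x ∈ gW i, ∀ y ∈ gW j,
      bW x y = -((-1 : K) ^ (i.val * j.val)) • bW y x)
    (Φ : V →ₗ[K] W)
    (hΦb : ∀ x y : V, Φ (bV x y) = bW (Φ x) (Φ y))
    (hΦg : ∀ i : ZMod 2, ∀ x ∈ gV i, Φ x ∈ gW i)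
    (LM : Submodule K V) (LmW LN : Submodule K W) (hLN : LN ≤ LmW)
    (hΦLM : ∀ x ∈ LM, Φ x ∈ LN)
    (hNm : ∀ x ∈ LN, ∀ y ∈ LmW, bW x y = 0)
    (d : V) (hd : d ∈ gV 1) (hdd : bV d d = 0)
    (δB : V) (hδB : δB ∈ gV 1)
    (δB' : W) (hδB' : δB' ∈ LmW) (hδB'odd : δB' ∈ gW 1)
    (hlift : Φ δB - δB' ∈ LN)
    (hγM : bV d δB + (2 : K)⁻¹ • bV δB δB ∈ LM) :
    ∃ η : W, η ∈ LN ∧ η ∈ gW 1 ∧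
      Φ (bV d δB + (2 : K)⁻¹ • bV δB δB) -
          (bW (Φ d) δB' + (2 : K)⁻¹ • bW δB' δB') = bW (Φ d) η := by
  set η := Φ δB - δB' with hη
  have hηodd : η ∈ gW 1 := Submodule.sub_mem _ (hΦg 1 δB hδB) hδB'odd
  refine ⟨η, hlift, hηodd, ?_⟩
  have e1 : bW η δB' = 0 := hNm η hlift δB' hδB'
  have e2 : bW η η = 0 := hNm η hlift η (hLN hlift)
  have e3 : bW δB' η = 0 := by
    rw [hantiW 1 1 δB' hδB'odd η hηodd, e1, smul_zero]
  have hΦδB : Φ δB = δB' + η := by rw [hη]; abel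
  rw [map_add, map_smul, hΦb, hΦb, hΦδB, map_add, map_add, map_add,
    LinearMap.add_apply, LinearMap.add_apply, e1, e2, e3]
  abel_nf
end
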